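/- arXiv:2207.00832 — 2 statements merged into one kernel-verified Lean document; each statement's English description precedes it below -/
import Mathlib

section
/- For the error ball B^edit, there exist real constants c1, c2 and an even integer n0 such that for every even n ≥ n0 and each N ∈ {1,2}, (3/2)·log2 n + c1 ≤ ρ_b(n,N;B^edit) ≤ (3/2)·log2 n + c2. -/
namespace BRC

/-- Hamming distance between two binary words (of the same length). -/
def hammingDist (x y : List Bool) : ℕ :=
  (List.zip x y).countP (fun p => p.1 != p.2)

/-- `balanced n` is the set `U_n` of binary words of length `n` with exactly `n/2` ones. -/
def balanced (n : ℕ) : Set (List Bool) :=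
  {x | x.length = n ∧ x.count true = n / 2}

/-- `B^S(x)`: words obtained from `x` by at most one substitution. -/
def BS (x : List Bool) : Set (List Bool) :=
  {y | y.length = x.length ∧ hammingDist x y ≤ 1}

/-- `B^D(x)`: words obtained from `x` by deleting one symbol. -/
def BD (x : List Bool) : Set (List Bool) :=
  {y | ∃ (u v : List Bool) (b : Bool), x = u ++ b :: v ∧ y = u ++ v}

/-- `B^I(x)`: words obtained from `x` by inserting one symbol. -/
def BI (x : List Bool) : Set (List Bool) :=
  {y | ∃ (u v : List Bool) (b : Bool), x = u ++ v ∧ y = u ++ b :: v}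

def BDI (x : List Bool) : Set (List Bool) := BD x ∪ BI x
def BSD (x : List Bool) : Set (List Bool) := BS x ∪ BD x
def BSI (x : List Bool) : Set (List Bool) := BS x ∪ BI x
def Bedit (x : List Bool) : Set (List Bool) := BS x ∪ BD x ∪ BI x

/-- `C` is a balanced `(n,N;B)`-reconstruction code: `C ⊆ U_n` and `ν(C;B) < N`. -/
def reconCode (n N : ℕ) (B : List Bool → Set (List Bool)) (C : Set (List Bool)) : Prop :=
  C ⊆ balanced n ∧ ∀ x ∈ C, ∀ y ∈ C, x ≠ y → (B x ∩ B y).ncard < N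

/-- `ρ_b(n,N;B)`: optimal redundancy of a balanced `(n,N;B)`-reconstruction code. -/
noncomputable def rho (n N : ℕ) (B : List Bool → Set (List Bool)) : ℝ :=
  sInf {r : ℝ | ∃ C : Set (List Bool),
    reconCode n N B C ∧ r = (n : ℝ) - Real.logb 2 (C.ncard : ℝ)}

/-- `(10)^m`. -/
def pat10 (m : ℕ) : List Bool := (List.replicate m [true, false]).flatten
/-- `(01)^m`. -/
def pat01 (m : ℕ) : List Bool := (List.replicate m [false, true]).flatten

/-- Type-A-confusable with parameter `m`: `{c, c'} = {(10)^m, (01)^m}`. -/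
def TypeAWith (m : ℕ) (x y : List Bool) : Prop :=
  ∃ u v : List Bool,
    (x = u ++ pat10 m ++ v ∧ y = u ++ pat01 m ++ v) ∨
    (x = u ++ pat01 m ++ v ∧ y = u ++ pat10 m ++ v)

/-- Type-A-confusable (with some `m ≥ 1`). -/
def TypeA (x y : List Bool) : Prop := ∃ m, 1 ≤ m ∧ TypeAWith m x y

/-- Type-B-confusable with parameter `m`:
`{c, c'} = {0 1^m, 1^m 0}` or `{c, c'} = {1 0^m, 0^m 1}`. -/
def TypeBWith (m : ℕ) (x y : List Bool) : Prop :=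
  ∃ u v : List Bool,
    ((x = u ++ (false :: List.replicate m true) ++ v ∧
        y = u ++ (List.replicate m true ++ [false]) ++ v) ∨
     (x = u ++ (List.replicate m true ++ [false]) ++ v ∧
        y = u ++ (false :: List.replicate m true) ++ v)) ∨
    ((x = u ++ (true :: List.replicate m false) ++ v ∧
        y = u ++ (List.replicate m false ++ [true]) ++ v) ∨
     (x = u ++ (List.replicate m false ++ [true]) ++ v ∧
        y = u ++ (true :: List.replicate m false) ++ v))

/-- Type-B-confusable (with some `m ≥ 2`). -/
def TypeB (x y : List Bool) : Prop := ∃ m, 2 ≤ m ∧ TypeBWith m x y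

/-- Number of runs of a binary word. -/
def numRuns (x : List Bool) : ℕ := (x.destutter (· ≠ ·)).length

/-- `V_{n-1}`: binary words of length `n-1` with Hamming weight `n/2` or `n/2 - 1`. -/
def Vset (n : ℕ) : Set (List Bool) :=
  {x | x.length = n - 1 ∧ (x.count true = n / 2 ∨ x.count true = n / 2 - 1)}

/-- VT weighted sum `Σ_{i=1}^n i·x_i` (positions indexed from 1). -/
def vtSum (x : List Bool) : ℕ :=
  (x.zipIdx.map (fun p => if p.1 then p.2 + 1 else 0)).sum

/-- The balanced Varshamov–Tenengolts code `BVT_a(n)`. -/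
def BVT (n a : ℕ) : Set (List Bool) :=
  {x | x ∈ balanced n ∧ vtSum x ≡ a [MOD n + 1]}

/-- `R_2^b(n,1,m)`: balanced words of length `n` all of whose runs have length at most `m`. -/
def R1 (n m : ℕ) : Set (List Bool) :=
  {x | x ∈ balanced n ∧ ∀ b : Bool, ¬ (List.replicate (m + 1) b <:+: x)}

/-!
Both bounds come from `(n + 1) · C(n, n/2)² ≤ 4ⁿ ≤ 2n · C(n, n/2)²` for even `n`, i.e.
`C(n, n/2) ≈ 2ⁿ / √n`.

Upper bound: a balanced Varshamov–Tenengolts code `BVT n a` corrects one substitution (its words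
have equal weight), one deletion, and one insertion (two words with a common supersequence also
have a common subsequence), so distinct codewords have disjoint edit balls. By pigeonhole over
the `n + 1` residues `a`, some `BVT n a` has at least `C(n, n/2) / (n + 1)` words.

Lower bound: if two codewords are at Hamming distance at most `2`, their substitution balls share
two words, so `ν(C; B^edit) ≤ 1` forces distance at least `3`. The substitution balls of radius `1`,
each of size `n + 1`, are then disjoint and consist of words of weight `n/2` or `n/2 ± 1`, so
`(n + 1) · |C| ≤ 3 · C(n, n/2)`.
-/


theorem hammingDist_cons (a b : Bool) (x y : List Bool) :
    hammingDist (a :: x) (b :: y) = (if a = b then 0 else 1) + hammingDist x y := by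
  cases a <;> cases b <;> simp [hammingDist, Nat.add_comm]

@[simp]
theorem hammingDist_self (x : List Bool) : hammingDist x x = 0 := by
  induction x with
  | nil => rfl
  | cons a t ih => simp [hammingDist_cons, ih]

theorem hammingDist_comm (x y : List Bool) : hammingDist x y = hammingDist y x := by
  induction x generalizing y with
  | nil => cases y <;> rfl
  | cons a t ih =>
    cases y with
    | nil => rfl
    | cons b s => simp only [hammingDist_cons, ih, eq_comm]

theorem hammingDist_append_left (u x y : List Bool) :
    hammingDist (u ++ x) (u ++ y) = hammingDist x y := by
  induction u with
  | nil => rfl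
  | cons a w ih => simp [hammingDist_cons, ih]

theorem hammingDist_triangle {x y z : List Bool} (hxy : x.length = y.length)
    (hyz : y.length = z.length) : hammingDist x z ≤ hammingDist x y + hammingDist y z := by
  induction x generalizing y z with
  | nil => simp [hammingDist]
  | cons a t ih =>
    obtain _ | ⟨b, s⟩ := y
    · simp at hxy
    obtain _ | ⟨c, w⟩ := z
    · simp at hyz
    simp only [List.length_cons, Nat.succ.injEq] at hxy hyz
    simp only [hammingDist_cons]
    have := ih hxy hyz
    cases a <;> cases b <;> cases c <;> simp <;> omega

theorem hammingDist_eq_zero_iff {x y : List Bool} (h : x.length = y.length) :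
    hammingDist x y = 0 ↔ x = y := by
  refine ⟨fun h0 => ?_, fun hxy => hxy ▸ hammingDist_self x⟩
  induction x generalizing y with
  | nil => exact (List.eq_nil_of_length_eq_zero h.symm).symm
  | cons a t ih =>
    obtain _ | ⟨b, s⟩ := y
    · simp at h
    rw [hammingDist_cons] at h0
    split_ifs at h0 with hab
    · rw [hab, ih (Nat.succ.inj h) (by omega)]
    · omega

theorem exists_eq_append_cons_of_hammingDist_eq_succ {x y : List Bool}
    (h : x.length = y.length) {k : ℕ} (hd : hammingDist x y = k + 1) :
    ∃ (u : List Bool) (b : Bool) (v w : List Bool),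
      x = u ++ b :: v ∧ y = u ++ (!b) :: w ∧ v.length = w.length ∧ hammingDist v w = k := by
  induction x generalizing y with
  | nil => cases y <;> simp [hammingDist] at hd h
  | cons a t ih =>
    obtain _ | ⟨b, s⟩ := y
    · simp at h
    simp only [List.length_cons, Nat.succ.injEq] at h
    rw [hammingDist_cons] at hd
    by_cases hab : a = b
    · obtain ⟨u, c, v, w, rfl, rfl, hlen, hvw⟩ := ih h (by simpa [hab] using hd)
      exact ⟨b :: u, c, v, w, by simp [hab], rfl, hlen, hvw⟩
    · refine ⟨[], a, t, s, rfl, ?_, h, by simp [hab] at hd; omega⟩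
      cases a <;> cases b <;> simp_all

theorem count_true_eq_or_of_hammingDist_eq_one {x y : List Bool} (h : x.length = y.length)
    (hd : hammingDist x y = 1) :
    x.count true = y.count true + 1 ∨ y.count true = x.count true + 1 := by
  obtain ⟨u, b, v, w, rfl, rfl, hlen, hvw⟩ := exists_eq_append_cons_of_hammingDist_eq_succ h hd
  obtain rfl := (hammingDist_eq_zero_iff hlen).mp hvw
  cases b <;> simp [List.count_append] <;> omega

theorem sum_map_zipIdx_succ (l : List Bool) (i : ℕ) :
    ((l.zipIdx (i + 1)).map fun p => if p.1 then p.2 + 1 else 0).sum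
      = ((l.zipIdx i).map fun p => if p.1 then p.2 + 1 else 0).sum + l.count true := by
  induction l generalizing i with
  | nil => rfl
  | cons a t ih =>
    simp only [List.zipIdx_cons, List.map_cons, List.sum_cons, ih (i + 1), List.count_cons]
    cases a <;> grind

theorem vtSum_cons (b : Bool) (t : List Bool) :
    vtSum (b :: t) = (if b then 1 else 0) + vtSum t + t.count true := by
  simp only [vtSum, List.zipIdx_cons, List.map_cons, List.sum_cons, sum_map_zipIdx_succ]
  cases b <;> grind

theorem vtSum_append_cons (u v : List Bool) (b : Bool) :
    vtSum (u ++ b :: v) = vtSum (u ++ v) + (if b then u.length + 1 else 0) + v.count true := by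
  induction u with
  | nil => cases b <;> simp [vtSum_cons, Nat.add_comm]
  | cons c u ih =>
    simp only [List.cons_append, vtSum_cons, ih, List.count_append, List.count_cons,
      List.length_cons]
    cases b <;> cases c <;> simp <;> omega

theorem exists_eq_append_of_append_eq_append {α : Type*} {u v p q : List α}
    (h : u ++ v = p ++ q) (hle : u.length ≤ p.length) : ∃ s, p = u ++ s ∧ v = s ++ q := by
  rcases List.append_eq_append_iff.mp h with h' | ⟨s, rfl, rfl⟩
  · exact h'
  · obtain rfl : s = [] := by simpa using hle
    exact ⟨[], by simp, by simp⟩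

theorem cons_append_eq_append_cons_of_count {a : Bool} {s q : List Bool}
    (hs : s.count true = if a then s.length else 0) : a :: (s ++ q) = s ++ a :: q := by
  have hrep : s = List.replicate s.length a := by
    refine List.eq_replicate_iff.mpr ⟨rfl, fun b hb => ?_⟩
    cases a
    · simp only [Bool.false_eq_true, if_false, List.count_eq_zero] at hs
      cases b
      · rfl
      · exact absurd hb hs
    · exact ((List.count_eq_length.mp hs) b hb).symm
  rw [hrep, ← List.cons_append, ← List.replicate_succ, List.replicate_succ', List.append_assoc,
    List.singleton_append]

theorem eq_of_vtSum_modEq_of_append_eq {n : ℕ} {u v p q : List Bool} {a b : Bool}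
    (hlen : u.length + v.length + 1 = n) (huv : u ++ v = p ++ q) (hle : u.length ≤ p.length)
    (hmod : vtSum (u ++ a :: v) ≡ vtSum (p ++ b :: q) [MOD n + 1]) :
    u ++ a :: v = p ++ b :: q := by
  obtain ⟨s, rfl, rfl⟩ := exists_eq_append_of_append_eq_append huv hle
  -- Both deletions leave `u ++ s ++ q`, so the congruence compares two numbers below `n + 1`;
  -- equality forces `a = b` and `s` to be a run of copies of `a`.
  rw [vtSum_append_cons, vtSum_append_cons, ← List.append_assoc, add_assoc, add_assoc] at hmod
  have hs := List.count_le_length (a := true) (l := s)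
  have hq := List.count_le_length (a := true) (l := q)
  simp only [List.length_append] at hlen
  have heq := (Nat.ModEq.add_left_cancel' _ hmod).eq_of_lt_of_lt
    (by cases a <;> simp [List.count_append] <;> omega)
    (by cases b <;> simp <;> omega)
  simp only [List.count_append, List.length_append] at heq
  obtain rfl : a = b := by cases a <;> cases b <;> simp at heq ⊢ <;> omega
  rw [List.append_assoc, cons_append_eq_append_cons_of_count]
  cases a <;> simp at heq ⊢ <;> omega

theorem eq_of_vtSum_modEq_of_mem_BD {n : ℕ} {x y z : List Bool} (hx : x.length = n)
    (hmod : vtSum x ≡ vtSum y [MOD n + 1]) (hzx : z ∈ BD x) (hzy : z ∈ BD y) : x = y := by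
  obtain ⟨u, v, a, rfl, rfl⟩ := hzx
  obtain ⟨p, q, b, rfl, huv⟩ := hzy
  have hlen := congrArg List.length huv
  simp only [List.length_append, List.length_cons] at hx hlen
  rcases le_total u.length p.length with hle | hle
  · exact eq_of_vtSum_modEq_of_append_eq (by omega) huv hle hmod
  · exact (eq_of_vtSum_modEq_of_append_eq (by omega) huv.symm hle hmod.symm).symm

theorem mem_BI_iff_mem_BD {x z : List Bool} : z ∈ BI x ↔ x ∈ BD z :=
  exists₃_congr fun _ _ _ => and_comm

theorem eq_or_exists_BD_of_append_cons_eq {u v p q : List Bool} {a b : Bool}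
    (h : u ++ a :: v = p ++ b :: q) (hle : u.length ≤ p.length) :
    u ++ v = p ++ q ∨ ∃ w, w ∈ BD (u ++ v) ∧ w ∈ BD (p ++ q) := by
  obtain ⟨s, rfl, hs⟩ := exists_eq_append_of_append_eq_append h hle
  cases s with
  | nil =>
    obtain ⟨rfl, rfl⟩ : a = b ∧ v = q := by simpa using hs
    simp
  | cons c s =>
    obtain ⟨rfl, rfl⟩ : a = c ∧ v = s ++ b :: q := by simpa using hs
    exact .inr ⟨u ++ s ++ q, ⟨u ++ s, q, b, by simp, rfl⟩, ⟨u, s ++ q, a, by simp, by simp⟩⟩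

theorem eq_or_exists_BD_of_mem_BD {x y z : List Bool} (hx : x ∈ BD z) (hy : y ∈ BD z) :
    x = y ∨ ∃ w, w ∈ BD x ∧ w ∈ BD y := by
  obtain ⟨u, v, a, rfl, rfl⟩ := hx
  obtain ⟨p, q, b, h, rfl⟩ := hy
  rcases le_total u.length p.length with hle | hle
  · exact eq_or_exists_BD_of_append_cons_eq h hle
  · rcases eq_or_exists_BD_of_append_cons_eq h.symm hle with h' | ⟨w, hwy, hwx⟩
    · exact .inl h'.symm
    · exact .inr ⟨w, hwx, hwy⟩

theorem vtSum_swap (u p r : List Bool) :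
    vtSum (u ++ true :: (p ++ false :: r)) + (p.length + 1)
      = vtSum (u ++ false :: (p ++ true :: r)) := by
  have hp : ∀ b, u ++ (p ++ b :: r) = (u ++ p) ++ b :: r := fun _ => by simp
  simp only [vtSum_append_cons u, hp, vtSum_append_cons (u ++ p), List.count_append,
    List.count_cons, List.length_append]
  simp only [List.append_assoc, Bool.false_eq_true, ↓reduceIte, add_zero, beq_true, BEq.rfl]
  omega

theorem hammingDist_le_two_of_mem_BS {x y z : List Bool} (hx : z ∈ BS x) (hy : z ∈ BS y) :
    x.length = y.length ∧ hammingDist x y ≤ 2 := by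
  obtain ⟨hzx, hdx⟩ := hx
  obtain ⟨hzy, hdy⟩ := hy
  refine ⟨hzx.symm.trans hzy, ?_⟩
  have := hammingDist_triangle hzx.symm hzy
  rw [hammingDist_comm z y] at this
  omega

theorem eq_of_vtSum_modEq_of_mem_BS {n : ℕ} {x y z : List Bool} (hx : x.length = n)
    (hcount : x.count true = y.count true) (hmod : vtSum x ≡ vtSum y [MOD n + 1])
    (hzx : z ∈ BS x) (hzy : z ∈ BS y) : x = y := by
  obtain ⟨hlen, hd⟩ := hammingDist_le_two_of_mem_BS hzx hzy
  interval_cases h : hammingDist x y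
  · exact (hammingDist_eq_zero_iff hlen).mp h
  · rcases count_true_eq_or_of_hammingDist_eq_one hlen h with h1 | h1 <;> omega
  · -- Equal weights at distance 2 means a `1` and a `0` swap places, which shifts `vtSum` by
    -- their distance, a number strictly between `0` and `n + 1`.
    exfalso
    obtain ⟨u, b, v, w, rfl, rfl, hvw, h1⟩ := exists_eq_append_cons_of_hammingDist_eq_succ hlen h
    obtain ⟨p, c, r, r', rfl, rfl, hrr, h0⟩ := exists_eq_append_cons_of_hammingDist_eq_succ hvw h1
    obtain rfl := (hammingDist_eq_zero_iff hrr).mp h0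
    simp only [List.length_append, List.length_cons] at hx
    obtain rfl : c = !b := by
      cases b <;> cases c <;> simp [List.count_append] at hcount ⊢ <;> omega
    have hswap := vtSum_swap u p r
    have hk : p.length + 1 ≡ 0 [MOD n + 1] := by
      refine Nat.ModEq.add_left_cancel' (vtSum (u ++ true :: (p ++ false :: r))) ?_
      cases b
      · simpa [hswap] using hmod
      · simpa [hswap] using hmod.symm
    have := hk.eq_of_lt_of_lt (by omega) (by omega)
    omega

theorem length_of_mem_BS {x z : List Bool} (h : z ∈ BS x) : z.length = x.length := h.1

theorem length_of_mem_BD {x z : List Bool} (h : z ∈ BD x) : z.length + 1 = x.length := by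
  obtain ⟨u, v, b, rfl, rfl⟩ := h
  simp only [List.length_append, List.length_cons]
  omega

theorem length_of_mem_BI {x z : List Bool} (h : z ∈ BI x) : z.length = x.length + 1 := by
  obtain ⟨u, v, b, rfl, rfl⟩ := h
  simp only [List.length_append, List.length_cons]
  omega

theorem mem_BS_of_mem_Bedit {x z : List Bool} (h : z ∈ Bedit x) (hl : z.length = x.length) :
    z ∈ BS x := by
  rcases h with (h | h) | h
  · exact h
  · have := length_of_mem_BD h; omega
  · have := length_of_mem_BI h; omega

theorem mem_BD_of_mem_Bedit {x z : List Bool} (h : z ∈ Bedit x) (hl : z.length + 1 = x.length) :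
    z ∈ BD x := by
  rcases h with (h | h) | h
  · have := length_of_mem_BS h; omega
  · exact h
  · have := length_of_mem_BI h; omega

theorem mem_BI_of_mem_Bedit {x z : List Bool} (h : z ∈ Bedit x) (hl : z.length = x.length + 1) :
    z ∈ BI x := by
  rcases h with (h | h) | h
  · have := length_of_mem_BS h; omega
  · have := length_of_mem_BD h; omega
  · exact h

theorem finite_BS (x : List Bool) : (BS x).Finite :=
  (List.finite_length_eq Bool x.length).subset fun _ h => h.1

theorem finite_Bedit (x : List Bool) : (Bedit x).Finite := by
  refine (List.finite_length_le Bool (x.length + 1)).subset fun z hz => ?_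
  show z.length ≤ x.length + 1
  rcases hz with (h | h) | h
  · have := length_of_mem_BS h; omega
  · have := length_of_mem_BD h; omega
  · have := length_of_mem_BI h; omega

theorem BS_cons (a : Bool) (t : List Bool) :
    BS (a :: t) = insert ((!a) :: t) ((a :: ·) '' BS t) := by
  ext (_ | ⟨b, s⟩)
  · simp [BS]
  · simp only [BS, Set.mem_insert_iff, Set.mem_image, List.cons.injEq, Set.mem_ofPred_eq,
      List.length_cons, hammingDist_cons]
    obtain rfl | rfl : b = a ∨ b = !a := by cases a <;> cases b <;> simp
    · simp
    · constructor
      · rintro ⟨hl, hd⟩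
        exact .inl ⟨rfl, ((hammingDist_eq_zero_iff (by omega)).mp (by simpa using hd)).symm⟩
      · rintro (⟨-, rfl⟩ | ⟨x, -, h, -⟩)
        · simp
        · cases a <;> simp at h

theorem ncard_BS (x : List Bool) : (BS x).ncard = x.length + 1 := by
  induction x with
  | nil =>
    have : BS [] = {[]} := by ext; simp [BS, hammingDist]
    simp [this]
  | cons a t ih =>
    rw [BS_cons, Set.ncard_insert_of_notMem (by simp) ((finite_BS t).image _),
      Set.ncard_image_of_injective _ List.cons_injective, ih, List.length_cons]

theorem Bedit_inter_eq_empty_of_vtSum_modEq {n : ℕ} {x y : List Bool} (hx : x ∈ balanced n)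
    (hy : y ∈ balanced n) (hmod : vtSum x ≡ vtSum y [MOD n + 1]) (hne : x ≠ y) :
    Bedit x ∩ Bedit y = ∅ := by
  obtain ⟨hxl, hxc⟩ := hx
  obtain ⟨hyl, hyc⟩ := hy
  refine Set.eq_empty_of_forall_notMem fun z ⟨hzx, hzy⟩ => hne ?_
  rcases hzx with (hzx | hzx) | hzx
  · have hzy := mem_BS_of_mem_Bedit hzy (by rw [length_of_mem_BS hzx, hxl, hyl])
    exact eq_of_vtSum_modEq_of_mem_BS hxl (hxc.trans hyc.symm) hmod hzx hzy
  · have hzy := mem_BD_of_mem_Bedit hzy (by rw [length_of_mem_BD hzx, hxl, hyl])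
    exact eq_of_vtSum_modEq_of_mem_BD hxl hmod hzx hzy
  · have hzy := mem_BI_of_mem_Bedit hzy (by rw [length_of_mem_BI hzx, hxl, hyl])
    rw [mem_BI_iff_mem_BD] at hzx hzy
    obtain h | ⟨w, hwx, hwy⟩ := eq_or_exists_BD_of_mem_BD hzx hzy
    · exact h
    · exact eq_of_vtSum_modEq_of_mem_BD hxl hmod hwx hwy

theorem reconCode_BVT {N : ℕ} (hN : 0 < N) (n a : ℕ) : reconCode n N Bedit (BVT n a) := by
  refine ⟨fun x hx => hx.1, fun x hx y hy hne => ?_⟩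
  rw [Bedit_inter_eq_empty_of_vtSum_modEq hx.1 hy.1 (hx.2.trans hy.2.symm) hne, Set.ncard_empty]
  exact hN

theorem two_le_ncard_BS_inter {x y : List Bool} (hlen : x.length = y.length) (hne : x ≠ y)
    (hd : hammingDist x y ≤ 2) : 2 ≤ (BS x ∩ BS y).ncard := by
  suffices ∃ z₁ z₂, z₁ ≠ z₂ ∧ z₁ ∈ BS x ∩ BS y ∧ z₂ ∈ BS x ∩ BS y by
    obtain ⟨z₁, z₂, hz, h₁, h₂⟩ := this
    rw [← Set.ncard_pair hz]
    exact Set.ncard_le_ncard (Set.pair_subset h₁ h₂) ((finite_BS x).inter_of_left _)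
  interval_cases h : hammingDist x y
  · exact absurd ((hammingDist_eq_zero_iff hlen).mp h) hne
  · refine ⟨x, y, hne, ⟨⟨rfl, by simp⟩, hlen, by rw [hammingDist_comm]; omega⟩,
      ⟨hlen.symm, by omega⟩, ⟨rfl, by simp⟩⟩
  · obtain ⟨u, b, v, w, rfl, rfl, hvw, h1⟩ := exists_eq_append_cons_of_hammingDist_eq_succ hlen h
    refine ⟨u ++ (!b) :: v, u ++ b :: w, by simp, ⟨⟨by simp, ?_⟩, ⟨by simp [hvw], ?_⟩⟩,
      ⟨⟨by simp [hvw], ?_⟩, ⟨by simp, ?_⟩⟩⟩ <;>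
    simp [hammingDist_append_left, hammingDist_cons, hammingDist_comm w v, h1]

theorem three_le_hammingDist_of_reconCode {n N : ℕ} (hN : N ≤ 2) {C : Set (List Bool)}
    (hC : reconCode n N Bedit C) {x y : List Bool} (hx : x ∈ C) (hy : y ∈ C) (hne : x ≠ y) :
    3 ≤ hammingDist x y := by
  by_contra! hd
  have hlen : x.length = y.length := (hC.1 hx).1.trans (hC.1 hy).1.symm
  have hsub : BS x ∩ BS y ⊆ Bedit x ∩ Bedit y :=
    Set.inter_subset_inter (fun _ h => .inl (.inl h)) (fun _ h => .inl (.inl h))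
  have := Set.ncard_le_ncard hsub ((finite_Bedit x).inter_of_left _)
  have := hC.2 x hx y hy hne
  have := two_le_ncard_BS_inter hlen hne (by omega)
  omega

def wordsOfWeight (n k : ℕ) : Set (List Bool) := {x | x.length = n ∧ x.count true = k}

theorem balanced_eq_wordsOfWeight (n : ℕ) : balanced n = wordsOfWeight n (n / 2) := rfl

theorem finite_wordsOfWeight (n k : ℕ) : (wordsOfWeight n k).Finite :=
  (List.finite_length_eq Bool n).subset fun _ h => h.1

theorem wordsOfWeight_succ_zero (n : ℕ) :
    wordsOfWeight (n + 1) 0 = (false :: ·) '' wordsOfWeight n 0 := by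
  ext (_ | ⟨b, x⟩) <;> [simp [wordsOfWeight]; cases b <;> simp [wordsOfWeight]]

theorem wordsOfWeight_succ_succ (n k : ℕ) :
    wordsOfWeight (n + 1) (k + 1)
      = (false :: ·) '' wordsOfWeight n (k + 1) ∪ (true :: ·) '' wordsOfWeight n k := by
  ext (_ | ⟨b, x⟩) <;> [simp [wordsOfWeight]; cases b <;> simp [wordsOfWeight]]

theorem ncard_wordsOfWeight (n k : ℕ) : (wordsOfWeight n k).ncard = n.choose k := by
  induction n generalizing k with
  | zero =>
    cases k with
    | zero =>
      have : wordsOfWeight 0 0 = {[]} := by ext (_ | _) <;> simp [wordsOfWeight]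
      simp [this]
    | succ k =>
      have : wordsOfWeight 0 (k + 1) = ∅ := by ext (_ | _) <;> simp [wordsOfWeight]
      simp [this]
  | succ n ih =>
    cases k with
    | zero =>
      rw [wordsOfWeight_succ_zero, Set.ncard_image_of_injective _ List.cons_injective, ih]
      simp
    | succ k =>
      rw [wordsOfWeight_succ_succ, Set.ncard_union_eq (by simp [Set.disjoint_left])
          ((finite_wordsOfWeight _ _).image _) ((finite_wordsOfWeight _ _).image _),
        Set.ncard_image_of_injective _ List.cons_injective,
        Set.ncard_image_of_injective _ List.cons_injective, ih, ih, Nat.choose_succ_succ', add_comm]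

theorem mem_wordsOfWeight_of_mem_BS {n k : ℕ} {x z : List Bool} (hx : x ∈ wordsOfWeight n k)
    (hz : z ∈ BS x) :
    z ∈ wordsOfWeight n (k - 1) ∪ wordsOfWeight n k ∪ wordsOfWeight n (k + 1) := by
  obtain ⟨hzl, hd⟩ := hz
  obtain ⟨hxl, hxk⟩ := hx
  interval_cases h : hammingDist x z
  · obtain rfl := (hammingDist_eq_zero_iff hzl.symm).mp h
    exact .inl (.inr ⟨hxl, hxk⟩)
  · rcases count_true_eq_or_of_hammingDist_eq_one hzl.symm h with h' | h'
    · exact .inl (.inl ⟨by omega, by omega⟩)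
    · exact .inr ⟨by omega, by omega⟩

theorem ncard_wordsOfWeight_near_middle_le (n : ℕ) :
    (wordsOfWeight n (n / 2 - 1) ∪ wordsOfWeight n (n / 2) ∪ wordsOfWeight n (n / 2 + 1)).ncard
      ≤ 3 * n.choose (n / 2) := by
  grw [Set.ncard_union_le, Set.ncard_union_le]
  simp only [ncard_wordsOfWeight]
  have := Nat.choose_le_middle (n / 2 - 1) n
  have := Nat.choose_le_middle (n / 2 + 1) n
  omega

theorem succ_mul_ncard_le_of_reconCode {n N : ℕ} (hN : N ≤ 2) {C : Set (List Bool)}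
    (hC : reconCode n N Bedit C) : (n + 1) * C.ncard ≤ 3 * n.choose (n / 2) := by
  have hCfin : C.Finite := (finite_wordsOfWeight n (n / 2)).subset hC.1
  have hdisj : C.PairwiseDisjoint BS := by
    refine fun x hx y hy hne => Set.disjoint_left.mpr fun z hzx hzy => ?_
    have := three_le_hammingDist_of_reconCode hN hC hx hy hne
    have := (hammingDist_le_two_of_mem_BS hzx hzy).2
    omega
  have hsub : ⋃ x ∈ C, BS x
      ⊆ wordsOfWeight n (n / 2 - 1) ∪ wordsOfWeight n (n / 2) ∪ wordsOfWeight n (n / 2 + 1) :=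
    Set.iUnion₂_subset fun x hx _ hz => mem_wordsOfWeight_of_mem_BS (hC.1 hx) hz
  calc (n + 1) * C.ncard = ∑ᶠ x ∈ C, (BS x).ncard := by
        rw [finsum_mem_eq_finite_toFinset_sum _ hCfin, Set.ncard_eq_toFinset_card _ hCfin,
          Finset.sum_congr rfl fun x hx => by rw [ncard_BS, (hC.1 (hCfin.mem_toFinset.mp hx)).1]]
        simp [mul_comm]
    _ = (⋃ x ∈ C, BS x).ncard := (hCfin.ncard_biUnion (fun x _ => finite_BS x) hdisj).symm
    _ ≤ _ := Set.ncard_le_ncard hsub (by simp [finite_wordsOfWeight])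
    _ ≤ 3 * n.choose (n / 2) := ncard_wordsOfWeight_near_middle_le n

theorem exists_choose_le_succ_mul_ncard_BVT (n : ℕ) :
    ∃ a, (n.choose (n / 2) : ℝ) ≤ (n + 1) * (BVT n a).ncard := by
  have hU := finite_wordsOfWeight n (n / 2)
  obtain ⟨a, ha, hfiber⟩ := Finset.exists_le_card_fiber_of_nsmul_le_card_of_maps_to
    (f := fun x => vtSum x % (n + 1)) (t := Finset.range (n + 1))
    (b := (n.choose (n / 2) : ℝ) / (n + 1))
    (fun x _ => Finset.mem_range.mpr (Nat.mod_lt _ n.succ_pos)) (by simp)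
    (by
      rw [Finset.card_range, nsmul_eq_mul, ← Set.ncard_eq_toFinset_card _ hU, ncard_wordsOfWeight]
      push_cast
      rw [mul_div_cancel₀ _ (by positivity)])
  have hBVT : BVT n a = {x ∈ hU.toFinset | vtSum x % (n + 1) = a} := by
    ext x
    simp [BVT, Nat.ModEq, Nat.mod_eq_of_lt (Finset.mem_range.mp ha), balanced_eq_wordsOfWeight]
  refine ⟨a, ?_⟩
  rw [hBVT, Set.ncard_coe_finset, ← div_le_iff₀' (by positivity)]
  exact hfiber

theorem two_mul_add_one_mul_centralBinom_sq_le (m : ℕ) :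
    (2 * m + 1) * m.centralBinom ^ 2 ≤ 16 ^ m := by
  induction m with
  | zero => simp
  | succ m ih =>
    refine Nat.le_of_mul_le_mul_right (c := (m + 1) ^ 2) ?_ (by positivity)
    calc (2 * (m + 1) + 1) * (m + 1).centralBinom ^ 2 * (m + 1) ^ 2
        = (2 * m + 3) * ((m + 1) * (m + 1).centralBinom) ^ 2 := by ring
      _ = (4 * (2 * m + 3) * (2 * m + 1)) * ((2 * m + 1) * m.centralBinom ^ 2) := by
          rw [Nat.succ_mul_centralBinom_succ]; ring
      _ ≤ (4 * (2 * m + 3) * (2 * m + 1)) * 16 ^ m := by gcongr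
      _ ≤ (16 * (m + 1) ^ 2) * 16 ^ m := by gcongr ?_ * _; nlinarith
      _ = 16 ^ (m + 1) * (m + 1) ^ 2 := by ring

theorem sixteen_pow_le_four_mul_mul_centralBinom_sq {m : ℕ} (hm : 0 < m) :
    16 ^ m ≤ 4 * m * m.centralBinom ^ 2 := by
  induction m, hm using Nat.le_induction with
  | base => decide
  | succ m hm ih =>
    refine Nat.le_of_mul_le_mul_right (c := (m + 1) ^ 2) ?_ (by positivity)
    calc 16 ^ (m + 1) * (m + 1) ^ 2 = 16 * (m + 1) ^ 2 * 16 ^ m := by ring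
      _ ≤ 16 * (m + 1) ^ 2 * (4 * m * m.centralBinom ^ 2) := by gcongr
      _ = 16 * (m + 1) * (4 * m * (m + 1)) * m.centralBinom ^ 2 := by ring
      _ ≤ 16 * (m + 1) * (2 * m + 1) ^ 2 * m.centralBinom ^ 2 := by gcongr ?_ * _; nlinarith
      _ = 4 * (m + 1) * ((m + 1) * (m + 1).centralBinom) ^ 2 := by
          rw [Nat.succ_mul_centralBinom_succ]; ring
      _ = 4 * (m + 1) * (m + 1).centralBinom ^ 2 * (m + 1) ^ 2 := by ring

theorem succ_mul_choose_half_sq_le {n : ℕ} (hn : Even n) :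
    (n + 1) * n.choose (n / 2) ^ 2 ≤ 4 ^ n := by
  obtain ⟨m, rfl⟩ := hn
  rw [show (m + m) / 2 = m by omega, ← two_mul, ← Nat.centralBinom_eq_two_mul_choose, pow_mul]
  exact two_mul_add_one_mul_centralBinom_sq_le m

theorem four_pow_le_two_mul_mul_choose_half_sq {n : ℕ} (hn : Even n) (hn0 : 0 < n) :
    4 ^ n ≤ 2 * n * n.choose (n / 2) ^ 2 := by
  obtain ⟨m, rfl⟩ := hn
  rw [show (m + m) / 2 = m by omega, ← two_mul, ← Nat.centralBinom_eq_two_mul_choose, pow_mul]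
  convert sixteen_pow_le_four_mul_mul_centralBinom_sq (m := m) (by omega) using 1 <;> ring

section Redundancy

open Real

theorem logb_two_le_logb_two_add_one {x : ℝ} (hx : 0 ≤ x) : logb 2 x ≤ logb 2 (x + 1) := by
  rcases hx.eq_or_lt with rfl | hx
  · simp
  · exact logb_le_logb_of_le one_lt_two hx (by linarith)

theorem logb_two_add_one_le {x : ℝ} (hx : 1 ≤ x) : logb 2 (x + 1) ≤ logb 2 x + 1 := by
  calc logb 2 (x + 1) ≤ logb 2 (2 * x) :=
        logb_le_logb_of_le one_lt_two (by linarith) (by linarith)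
    _ = logb 2 x + 1 := by
      rw [logb_mul two_ne_zero (by positivity), logb_self_eq_one one_lt_two, add_comm]

theorem logb_two_four_pow (n : ℕ) : logb 2 (4 ^ n : ℝ) = 2 * n := by
  rw [logb_pow, show (4 : ℝ) = 2 ^ 2 by norm_num, logb_pow, logb_self_eq_one one_lt_two]
  ring

theorem le_redundancy_of_reconCode {n N : ℕ} (hn : Even n) (hN : N ≤ 2) {C : Set (List Bool)}
    (hC : reconCode n N Bedit C) : 3 / 2 * logb 2 n - 2 ≤ n - logb 2 C.ncard := by
  set c := n.choose (n / 2)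
  have hc : 0 < c := Nat.choose_pos (Nat.div_le_self n 2)
  have hpack : ((n : ℝ) + 1) * C.ncard ≤ 3 * c := by
    exact_mod_cast succ_mul_ncard_le_of_reconCode hN hC
  have hsize : (n : ℝ) + 1 ≤ 3 * c := by
    have := Nat.choose_le_middle 1 n
    rw [Nat.choose_one_right] at this
    exact_mod_cast (by omega : n + 1 ≤ 3 * c)
  have hcentral : ((n : ℝ) + 1) * c ^ 2 ≤ 4 ^ n := by
    exact_mod_cast succ_mul_choose_half_sq_le hn
  have hlogC : logb 2 C.ncard ≤ logb 2 (3 * c / (n + 1)) := by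
    rcases C.ncard.eq_zero_or_pos with h | h
    · -- `logb 2 0 = 0`: the empty code has redundancy `n`.
      rw [h, Nat.cast_zero, logb_zero]
      exact logb_nonneg one_lt_two ((one_le_div (by positivity)).mpr hsize)
    · exact logb_le_logb_of_le one_lt_two (by positivity)
        ((le_div_iff₀' (by positivity)).mpr hpack)
  have hlogc : logb 2 ((n + 1) * c ^ 2) ≤ 2 * n :=
    (logb_le_logb_of_le one_lt_two (by positivity) hcentral).trans_eq (logb_two_four_pow n)
  have h3 : logb 2 3 ≤ 2 := by
    calc logb 2 3 ≤ logb 2 (4 ^ 1) := logb_le_logb_of_le one_lt_two (by norm_num) (by norm_num)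
      _ = 2 := by rw [logb_two_four_pow]; norm_num
  rw [logb_div (by positivity) (by positivity), logb_mul (by norm_num) (by positivity)] at hlogC
  rw [logb_mul (by positivity) (by positivity), logb_pow] at hlogc
  have := logb_two_le_logb_two_add_one (Nat.cast_nonneg (α := ℝ) n)
  push_cast at hlogc
  linarith

theorem redundancy_le_of_choose_le {n : ℕ} (hn : Even n) (hn0 : 0 < n) {C : Set (List Bool)}
    (hC : (n.choose (n / 2) : ℝ) ≤ (n + 1) * C.ncard) :
    n - logb 2 C.ncard ≤ 3 / 2 * logb 2 n + 2 := by
  set c := n.choose (n / 2)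
  have hc : 0 < c := Nat.choose_pos (Nat.div_le_self n 2)
  have hCpos : (0 : ℝ) < C.ncard :=
    pos_of_mul_pos_right ((show (0 : ℝ) < c by positivity).trans_le hC) (by positivity)
  have hcentral : (4 : ℝ) ^ n ≤ 2 * n * c ^ 2 := by
    exact_mod_cast four_pow_le_two_mul_mul_choose_half_sq hn hn0
  have hlogc : 2 * n ≤ logb 2 (2 * n * c ^ 2) :=
    (logb_two_four_pow n).symm.trans_le (logb_le_logb_of_le one_lt_two (by positivity) hcentral)
  have hlogC : logb 2 c ≤ logb 2 ((n + 1) * C.ncard) :=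
    logb_le_logb_of_le one_lt_two (by positivity) hC
  rw [logb_mul (by positivity) (by positivity), logb_mul (by norm_num) (by positivity),
    logb_self_eq_one one_lt_two, logb_pow] at hlogc
  rw [logb_mul (by positivity) (by positivity)] at hlogC
  have := logb_two_add_one_le (Nat.one_le_cast.mpr hn0)
  push_cast at hlogc
  linarith

end Redundancy

/-- Theorem: for `N ∈ {1,2}`, `ρ_b(n,N;B^edit) = (3/2)·log₂ n + Θ(1)`. -/
theorem stmt6 :
    ∃ c1 c2 : ℝ, ∃ n0 : ℕ, Even n0 ∧ ∀ n : ℕ, Even n → n0 ≤ n →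
      ∀ N : ℕ, N = 1 ∨ N = 2 →
        (3 / 2) * Real.logb 2 (n : ℝ) + c1 ≤ rho n N Bedit ∧
        rho n N Bedit ≤ (3 / 2) * Real.logb 2 (n : ℝ) + c2 := by
  refine ⟨-2, 2, 2, even_two, fun n hn hn2 N hN => ?_⟩
  obtain ⟨a, ha⟩ := exists_choose_le_succ_mul_ncard_BVT n
  have hBVT : reconCode n N Bedit (BVT n a) := reconCode_BVT (by omega) n a
  have hlower : ∀ r ∈ {r : ℝ | ∃ C, reconCode n N Bedit C ∧ r = n - Real.logb 2 C.ncard},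
      3 / 2 * Real.logb 2 n + -2 ≤ r := by
    rintro r ⟨C, hC, rfl⟩
    linarith [le_redundancy_of_reconCode hn (by omega) hC]
  exact ⟨le_csInf ⟨_, _, hBVT, rfl⟩ hlower,
    (csInf_le ⟨_, hlower⟩ ⟨_, hBVT, rfl⟩).trans (redundancy_le_of_choose_le hn (by omega) ha)⟩

end BRC
end

section
/- For every even n ≥ 2 there exists a ∈ {0, 1, ..., n} such that the balanced Varshamov–Tenengolts code BVT_a(n) = {(x_1,...,x_n) ∈ U_n : Σ_{i=1}^n i·x_i ≡ a (mod n+1)} has size at least C(n, n/2)/(n+1), and for every a the code BVT_a(n) has pairwise disjoint single-deletion balls: |B^D(x) ∩ B^D(y)| = 0 for all distinct x, y ∈ BVT_a(n). -/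
namespace BRC

/-!
Pigeonhole over the `n + 1` residues of the VT sum gives a code of size at least
`C(n, n/2) / (n + 1)`. If `z` arises from `x` by deleting a symbol `b` and from `y` by
deleting a symbol `b'` further right, then `x = u ++ b :: w ++ v` and `y = u ++ w ++ b' :: v`.
Up to a common term their VT sums are `b (|u| + 1) + wt w` and `b' (|u| + |w| + 1)`, both
smaller than the modulus, so a VT congruence makes them equal; this forces
`b :: w = w ++ [b']`, i.e. `x = y`.
-/

open Finset

lemma vtSum_zipIdx (x : List Bool) (k : ℕ) :
    ((x.zipIdx k).map fun p : Bool × ℕ => if p.1 then p.2 + 1 else 0).sum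
      = vtSum x + k * x.count true := by
  induction x generalizing k with
  | nil => simp [vtSum]
  | cons b t ih =>
    have hb : vtSum (b :: t) = (if b then 1 else 0) + (vtSum t + 1 * t.count true) := by
      rw [vtSum, List.zipIdx_cons, List.map_cons, List.sum_cons, ih]
    rw [List.zipIdx_cons, List.map_cons, List.sum_cons, ih, hb, List.count_cons]
    cases b <;> simp <;> ring

lemma vtSum_append (p q : List Bool) :
    vtSum (p ++ q) = vtSum p + vtSum q + p.length * q.count true := by
  rw [vtSum, List.zipIdx_append, List.map_append, List.sum_append, zero_add, vtSum_zipIdx q,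
    ← add_assoc]
  rfl

lemma vtSum_singleton (b : Bool) : vtSum [b] = b.toNat := by
  cases b <;> rfl

lemma vtSum_cons_s9 (b : Bool) (x : List Bool) :
    vtSum (b :: x) = b.toNat + vtSum x + x.count true := by
  rw [← List.singleton_append, vtSum_append, vtSum_singleton, List.length_singleton, one_mul]

lemma vtSum_append_singleton (x : List Bool) (b : Bool) :
    vtSum (x ++ [b]) = vtSum x + b.toNat * (x.length + 1) := by
  rw [vtSum_append, vtSum_singleton, List.count_singleton]
  cases b <;> simp
  ring

lemma cons_eq_append_singleton_of_toNat_eq {i : ℕ} {w : List Bool} {b b' : Bool}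
    (h : b.toNat * (i + 1) + w.count true = b'.toNat * (i + w.length + 1)) :
    b :: w = w ++ [b'] := by
  have hle : w.count true ≤ w.length := List.count_le_length
  cases b <;> cases b' <;> simp only [Bool.toNat_false, Bool.toNat_true] at h
  · have hw : w = List.replicate w.length false := by
      refine List.eq_replicate_iff.2 ⟨rfl, fun c hc => ?_⟩
      cases c
      · rfl
      · exact absurd hc (List.count_eq_zero.1 (by omega))
    rw [hw, ← List.replicate_succ, ← List.replicate_succ']
  · omega
  · omega
  · have hw : w = List.replicate w.length true :=
      List.eq_replicate_iff.2 ⟨rfl, fun c hc => (List.count_eq_length.1 (by omega) c hc).symm⟩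
    rw [hw, ← List.replicate_succ, ← List.replicate_succ']

lemma eq_of_vtSum_modEq_of_common_deletion (u w v : List Bool) (b b' : Bool)
    (h : vtSum (u ++ b :: (w ++ v)) ≡ vtSum (u ++ w ++ b' :: v)
      [MOD (u ++ b :: (w ++ v)).length + 1]) :
    u ++ b :: (w ++ v) = u ++ w ++ b' :: v := by
  set i := u.length
  set k := w.length
  set S := vtSum u + vtSum w + vtSum v + i * (w.count true + v.count true)
    + (k + 1) * v.count true
  have hx : vtSum (u ++ b :: (w ++ v)) = S + (b.toNat * (i + 1) + w.count true) := by
    rw [show u ++ b :: (w ++ v) = u ++ (b :: w) ++ v by simp, vtSum_append, vtSum_append,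
      vtSum_cons_s9]
    simp only [List.length_append, List.length_cons, List.count_cons]
    cases b <;> simp [S] <;> ring
  have hy : vtSum (u ++ w ++ b' :: v) = S + b'.toNat * (i + k + 1) := by
    rw [show u ++ w ++ b' :: v = u ++ (w ++ [b']) ++ v by simp, vtSum_append, vtSum_append,
      vtSum_append_singleton]
    simp only [List.length_append, List.length_singleton, List.count_append,
      List.count_singleton]
    cases b' <;> simp [S] <;> ring
  have hlen : (u ++ b :: (w ++ v)).length = i + k + v.length + 1 := by simp; omega
  have hw : w.count true ≤ k := List.count_le_length
  rw [hx, hy] at h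
  have key := (Nat.ModEq.add_left_cancel' S h).eq_of_lt_of_lt
    (by cases b <;> simp [hlen] <;> omega) (by cases b' <;> simp [hlen])
  simpa using congrArg (u ++ · ++ v) (cons_eq_append_singleton_of_toNat_eq key)

theorem BD_inter_BD_eq_empty_of_vtSum_modEq {x y : List Bool}
    (h : vtSum x ≡ vtSum y [MOD x.length + 1]) (hne : x ≠ y) : BD x ∩ BD y = ∅ := by
  refine Set.eq_empty_of_forall_notMem ?_
  rintro z ⟨⟨u, v, b, rfl, rfl⟩, u', v', b', rfl, hz⟩
  apply hne
  rcases List.append_eq_append_iff.mp hz with ⟨w, rfl, rfl⟩ | ⟨w, rfl, rfl⟩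
  · exact eq_of_vtSum_modEq_of_common_deletion u w v' b b' h
  · refine (eq_of_vtSum_modEq_of_common_deletion u' w v b' b ?_).symm
    have hlen : (u' ++ b' :: (w ++ v)).length = (u' ++ w ++ b :: v).length := by simp; omega
    rw [hlen]
    exact h.symm

def indicatorWord {n : ℕ} (s : Finset (Fin n)) : List Bool :=
  List.ofFn fun i => decide (i ∈ s)

lemma indicatorWord_injective (n : ℕ) : Function.Injective (@indicatorWord n) := by
  intro s t h
  ext i
  simpa [indicatorWord] using congrFun (List.ofFn_injective h) i

lemma count_true_ofFn {n : ℕ} (f : Fin n → Bool) :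
    (List.ofFn f).count true = #{i | f i = true} := by
  rw [List.ofFn_eq_map, List.count_eq_countP, List.countP_map, List.countP_eq_length_filter]
  -- `univ : Finset (Fin n)` is `List.finRange n` underneath
  rfl

lemma mem_balanced_iff {n : ℕ} {x : List Bool} :
    x ∈ balanced n ↔ ∃ s : Finset (Fin n), #s = n / 2 ∧ indicatorWord s = x := by
  constructor
  · rintro ⟨rfl, hcount⟩
    refine ⟨({i | x.get i = true} : Finset _), ?_, ?_⟩
    · rw [← count_true_ofFn, List.ofFn_get, hcount]
    · simp [indicatorWord]
  · rintro ⟨s, hs, rfl⟩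
    refine ⟨List.length_ofFn, ?_⟩
    simp [indicatorWord, count_true_ofFn, hs]

def balancedFinset (n : ℕ) : Finset (List Bool) :=
  (powersetCard (n / 2) (univ : Finset (Fin n))).image indicatorWord

lemma coe_balancedFinset (n : ℕ) : (balancedFinset n : Set (List Bool)) = balanced n := by
  ext x
  simp [balancedFinset, mem_balanced_iff]

lemma card_balancedFinset (n : ℕ) : #(balancedFinset n) = n.choose (n / 2) := by
  rw [balancedFinset, card_image_of_injective _ (indicatorWord_injective n), card_powersetCard,
    card_univ, Fintype.card_fin]

lemma BVT_eq_filter {n a : ℕ} (ha : a ≤ n) :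
    BVT n a = ↑{x ∈ balancedFinset n | vtSum x % (n + 1) = a} := by
  ext x
  simp [BVT, ← coe_balancedFinset, Nat.ModEq, Nat.mod_eq_of_lt (Nat.lt_succ_of_le ha)]

theorem exists_le_ncard_BVT (n : ℕ) :
    ∃ a ≤ n, ((n.choose (n / 2) : ℕ) : ℝ) / ((n : ℝ) + 1) ≤ ((BVT n a).ncard : ℝ) := by
  have hmaps : ∀ x ∈ balancedFinset n, vtSum x % (n + 1) ∈ range (n + 1) :=
    fun x _ => mem_range.2 (Nat.mod_lt _ n.succ_pos)
  obtain ⟨a, ha, hcard⟩ := exists_le_card_fiber_of_nsmul_le_card_of_maps_to hmaps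
    ⟨0, by simp⟩ (b := ((n.choose (n / 2) : ℕ) : ℝ) / ((n : ℝ) + 1)) (by
      rw [card_range, card_balancedFinset, nsmul_eq_mul, Nat.cast_succ,
        mul_div_cancel₀ _ n.cast_add_one_ne_zero])
  have ha : a ≤ n := Nat.lt_succ_iff.mp (mem_range.mp ha)
  exact ⟨a, ha, by rwa [BVT_eq_filter ha, Set.ncard_coe_finset]⟩

theorem stmt9_general (n : ℕ) :
    (∃ a : ℕ, a ≤ n ∧
      ((n.choose (n / 2) : ℕ) : ℝ) / ((n : ℝ) + 1) ≤ ((BVT n a).ncard : ℝ)) ∧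
    (∀ a : ℕ, ∀ x ∈ BVT n a, ∀ y ∈ BVT n a, x ≠ y → BD x ∩ BD y = ∅) := by
  refine ⟨exists_le_ncard_BVT n, fun a x hx y hy hne => ?_⟩
  refine BD_inter_BD_eq_empty_of_vtSum_modEq ?_ hne
  rw [hx.1.1]
  exact hx.2.trans hy.2.symm

/-- Theorem: some `BVT_a(n)` has size at least `C(n,n/2)/(n+1)`, and every `BVT_a(n)`
has pairwise disjoint single-deletion balls. -/
theorem stmt9 (n : ℕ) (hn : Even n) (h2 : 2 ≤ n) :
    (∃ a : ℕ, a ≤ n ∧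
      ((n.choose (n / 2) : ℕ) : ℝ) / ((n : ℝ) + 1) ≤ ((BVT n a).ncard : ℝ)) ∧
    (∀ a : ℕ, ∀ x ∈ BVT n a, ∀ y ∈ BVT n a, x ≠ y → BD x ∩ BD y = ∅) :=
  stmt9_general n

end BRC
end
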